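/- arXiv:1002.1192 — 2 statements merged into one kernel-verified Lean document; each statement's English description precedes it below -/
import Mathlib

section
/- Any two connected simple graphs with the same (finite) number of vertices and the same number of edges are slide-equivalent: there is a finite sequence of edge slides transforming the first graph into a graph isomorphic to the second. -/
/-!
Slides are reversible and preserve connectivity and the number of edges. If a vertex `v` of a
connected graph is not adjacent to `u`, a path from `v` to `u` leaves the closed neighbourhood
of `v` along an edge `wu'` with `w ~ v`; sliding `u'w` to `u'v` enlarges the neighbourhood of
`v`, so finitely many slides make `v` universal.

Once `v` is universal, an edge `e` and a non-edge `f`, both avoiding `v`, can be exchanged by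
slides: if `e = xw` and `f = xz` share `x`, slide `xv` to `xz` and then `xw` to `xv`; otherwise
pass through an edge `g` joining `e` to `f`. Exchanging the edges of one graph not in the other
one by one links any two graphs with the universal vertex `v` and equally many edges.
-/

/-- An edge slide: given distinct vertices `x, y, z` with `x ~ y`, `y ~ z` and `x ≁ z`,
slide the edge `xy` to `xz`. -/
def EdgeSlide {V : Type*} (G G' : SimpleGraph V) : Prop :=
  ∃ x y z : V, x ≠ z ∧ G.Adj x y ∧ G.Adj y z ∧ ¬ G.Adj x z ∧
    G' = G.deleteEdges {s(x, y)} ⊔ SimpleGraph.fromEdgeSet {s(x, z)}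

open Relation

namespace SimpleGraph

variable {V : Type*} {G H : SimpleGraph V} {e f g : Sym2 V} {a b v : V}

def replaceEdge (G : SimpleGraph V) (e f : Sym2 V) : SimpleGraph V :=
  G.deleteEdges {e} ⊔ fromEdgeSet {f}

lemma replaceEdge_adj :
    (G.replaceEdge e f).Adj a b ↔ G.Adj a b ∧ s(a, b) ≠ e ∨ s(a, b) = f ∧ a ≠ b := by
  simp [replaceEdge]

lemma edgeSet_replaceEdge (hf : ¬f.IsDiag) :
    (G.replaceEdge e f).edgeSet = insert f (G.edgeSet \ {e}) := by
  rw [replaceEdge, edgeSet_sup, edgeSet_deleteEdges, edgeSet_fromEdgeSet,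
    sdiff_eq_left.mpr (Set.disjoint_singleton_left.mpr (Sym2.mem_diagSet.not.mpr hf)),
    Set.union_singleton]

lemma replaceEdge_self (he : e ∈ G.edgeSet) : G.replaceEdge e e = G := by
  rw [← edgeSet_inj, edgeSet_replaceEdge (G.not_isDiag_of_mem_edgeSet he),
    Set.insert_sdiff_singleton, Set.insert_eq_of_mem he]

lemma replaceEdge_replaceEdge_of_notMem (hf : f ∉ G.edgeSet) (hfd : ¬f.IsDiag)
    (hgd : ¬g.IsDiag) : (G.replaceEdge e f).replaceEdge f g = G.replaceEdge e g := by
  rw [← edgeSet_inj, edgeSet_replaceEdge hgd, edgeSet_replaceEdge hfd, edgeSet_replaceEdge hgd,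
    Set.insert_sdiff_self_of_notMem (fun h => hf h.1)]

lemma replaceEdge_replaceEdge_of_mem (hg : g ∈ G.edgeSet) (hge : g ≠ e) (hef : e ≠ f)
    (hfd : ¬f.IsDiag) : (G.replaceEdge g f).replaceEdge e g = G.replaceEdge e f := by
  rw [← edgeSet_inj, edgeSet_replaceEdge (G.not_isDiag_of_mem_edgeSet hg),
    edgeSet_replaceEdge hfd, edgeSet_replaceEdge hfd]
  ext u
  simp only [Set.mem_insert_iff, Set.mem_sdiff, Set.mem_singleton_iff]
  grind

lemma ncard_edgeSet_replaceEdge [Finite V] (he : e ∈ G.edgeSet) (hf : f ∉ G.edgeSet)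
    (hfd : ¬f.IsDiag) : (G.replaceEdge e f).edgeSet.ncard = G.edgeSet.ncard := by
  rw [edgeSet_replaceEdge hfd, Set.ncard_insert_of_notMem (fun h => hf h.1),
    Set.ncard_sdiff_singleton_add_one he]

lemma IsUniversal.replaceEdge (hG : G.IsUniversal v) (hve : v ∉ e) :
    (G.replaceEdge e f).IsUniversal v := fun _ hvw =>
  replaceEdge_adj.mpr (.inl ⟨hG hvw, fun h => hve (h ▸ Sym2.mem_mk_left _ _)⟩)

lemma IsUniversal.mem_edgeSet (hH : H.IsUniversal v) (he : e ∈ G.edgeSet) (hve : v ∈ e) :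
    e ∈ H.edgeSet := by
  obtain ⟨w, rfl⟩ := Sym2.mem_iff_exists.mp hve
  exact hH (G.ne_of_adj he)

lemma Connected.of_adj_reachable (hG : G.Connected) (h : ∀ a b, G.Adj a b → H.Reachable a b) :
    H.Connected := by
  have := hG.nonempty
  refine Connected.mk fun a b => ?_
  rw [reachable_eq_reflTransGen] at h ⊢
  exact ReflTransGen.lift' id h _ _ ((reachable_iff_reflTransGen a b).mp (hG.preconnected a b))

end SimpleGraph

open SimpleGraph

section

variable {V : Type*} {G G' : SimpleGraph V} {e f : Sym2 V} {v x y z : V}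

lemma edgeSlide_replaceEdge (hxz : x ≠ z) (hxy : G.Adj x y) (hyz : G.Adj y z)
    (hnxz : ¬G.Adj x z) : EdgeSlide G (G.replaceEdge s(x, y) s(x, z)) :=
  ⟨x, y, z, hxz, hxy, hyz, hnxz, rfl⟩

namespace EdgeSlide

lemma symm (h : EdgeSlide G G') : EdgeSlide G' G := by
  obtain ⟨x, y, z, hxz, hxy, hyz, hnxz, rfl⟩ := h
  refine ⟨x, z, y, hxy.ne, replaceEdge_adj.mpr (.inr ⟨rfl, hxz⟩),
    replaceEdge_adj.mpr (.inl ⟨hyz.symm, by simp [hxz.symm, hyz.ne']⟩), ?_, ?_⟩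
  · simp [hxz, hyz.ne]
  · exact ((replaceEdge_replaceEdge_of_notMem hnxz (Sym2.mk_isDiag_iff.not.mpr hxz)
      (G.not_isDiag_of_mem_edgeSet hxy)).trans (replaceEdge_self hxy)).symm

instance : Std.Symm (EdgeSlide (V := V)) := ⟨fun _ _ => symm⟩

lemma ncard_edgeSet [Finite V] (h : EdgeSlide G G') : G'.edgeSet.ncard = G.edgeSet.ncard := by
  obtain ⟨x, y, z, hxz, hxy, -, hnxz, rfl⟩ := h
  exact ncard_edgeSet_replaceEdge hxy hnxz (Sym2.mk_isDiag_iff.not.mpr hxz)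

lemma ncard_edgeSet_of_reflTransGen [Finite V] (h : ReflTransGen EdgeSlide G G') :
    G'.edgeSet.ncard = G.edgeSet.ncard := by
  induction h with
  | refl => rfl
  | tail _ hs ih => exact hs.ncard_edgeSet.trans ih

lemma connected (h : EdgeSlide G G') (hG : G.Connected) : G'.Connected := by
  obtain ⟨x, y, z, hxz, hxy, hyz, hnxz, rfl⟩ := h
  refine hG.of_adj_reachable fun a b hab => ?_
  by_cases hab' : s(a, b) = s(x, y)
  · have hxzy : (G.replaceEdge s(x, y) s(x, z)).Reachable x y :=
      (replaceEdge_adj.mpr (.inr ⟨rfl, hxz⟩)).reachable.trans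
        (replaceEdge_adj.mpr (.inl ⟨hyz.symm, by simp [hxz.symm, hyz.ne']⟩)).reachable
    rcases Sym2.eq_iff.mp hab' with ⟨rfl, rfl⟩ | ⟨rfl, rfl⟩
    exacts [hxzy, hxzy.symm]
  · exact (replaceEdge_adj.mpr (.inl ⟨hab, hab'⟩)).reachable

end EdgeSlide

lemma exists_edgeSlide_neighborSet_ssubset (hG : G.Connected) (hv : ¬G.IsUniversal v) :
    ∃ G', EdgeSlide G G' ∧ G.neighborSet v ⊂ G'.neighborSet v := by
  obtain ⟨u, hvu, hu⟩ : ∃ u, v ≠ u ∧ ¬G.Adj v u := by simpa [IsUniversal] using hv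
  obtain ⟨⟨⟨w, u'⟩, hwu'⟩, -, hw, hu'⟩ := (hG.preconnected v u).some.exists_boundary_dart
    (insert v (G.neighborSet v)) (Set.mem_insert _ _) (by simp [hvu.symm, hu])
  simp only [Set.mem_insert_iff, mem_neighborSet, not_or] at hw hu'
  have hvw : G.Adj v w := hw.resolve_left fun h => hu'.2 (h ▸ hwu')
  refine ⟨_, edgeSlide_replaceEdge hu'.1 hwu'.symm hvw.symm (fun h => hu'.2 h.symm),
    (Set.ssubset_iff_of_subset fun a ha => ?_).mpr ⟨u', ?_, hu'.2⟩⟩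
  · exact replaceEdge_adj.mpr (.inl ⟨ha, by simp [Ne.symm hu'.1, hvw.ne]⟩)
  · exact replaceEdge_adj.mpr (.inr ⟨Sym2.eq_swap, Ne.symm hu'.1⟩)

theorem exists_reflTransGen_isUniversal [Finite V] {G : SimpleGraph V} (hG : G.Connected)
    (v : V) : ∃ G', ReflTransGen EdgeSlide G G' ∧ G'.IsUniversal v := by
  by_cases hv : G.IsUniversal v
  · exact ⟨G, .refl, hv⟩
  obtain ⟨G₁, hGG₁, hlt⟩ := exists_edgeSlide_neighborSet_ssubset hG hv
  obtain ⟨G', hG₁G', hG'⟩ := exists_reflTransGen_isUniversal (hGG₁.connected hG) v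
  exact ⟨G', .head hGG₁ hG₁G', hG'⟩
termination_by (G.neighborSet v)ᶜ.ncard
decreasing_by exact Set.ncard_lt_ncard (compl_lt_compl_iff_lt.mpr hlt)

lemma reflTransGen_replaceEdge_of_mem_of_mem (hG : G.IsUniversal v) (he : e ∈ G.edgeSet)
    (hf : f ∉ G.edgeSet) (hfd : ¬f.IsDiag) (hve : v ∉ e) (hvf : v ∉ f) (hxe : x ∈ e)
    (hxf : x ∈ f) : ReflTransGen EdgeSlide G (G.replaceEdge e f) := by
  obtain ⟨w, rfl⟩ := Sym2.mem_iff_exists.mp hxe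
  obtain ⟨z, rfl⟩ := Sym2.mem_iff_exists.mp hxf
  simp only [Sym2.mem_iff, not_or] at hve hvf
  have hxz : x ≠ z := by simpa using hfd
  have h₁ := edgeSlide_replaceEdge hxz (hG hve.1).symm (hG hvf.2) hf
  have hxw : x ≠ w := G.ne_of_adj he
  have hwz : w ≠ z := by rintro rfl; exact hf he
  have h₂ := edgeSlide_replaceEdge (G := G.replaceEdge s(x, v) s(x, z)) (Ne.symm hve.1)
    (replaceEdge_adj.mpr (.inl ⟨he, by simp [Ne.symm hve.1, Ne.symm hve.2]⟩))
    (replaceEdge_adj.mpr (.inl ⟨(hG hve.2).symm, by simp [hxw.symm, hve.1]⟩))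
    (by simp [replaceEdge_adj, hvf.2, hxz])
  rw [replaceEdge_replaceEdge_of_mem (hG hve.1).symm (by simp [hve.2, hxw])
    (by simp [hwz, hxz]) hfd] at h₂
  exact .head h₁ (.single h₂)

lemma reflTransGen_replaceEdge (hG : G.IsUniversal v) (he : e ∈ G.edgeSet) (hf : f ∉ G.edgeSet)
    (hfd : ¬f.IsDiag) (hve : v ∉ e) (hvf : v ∉ f) :
    ReflTransGen EdgeSlide G (G.replaceEdge e f) := by
  by_cases hshared : ∃ x, x ∈ e ∧ x ∈ f
  · obtain ⟨x, hxe, hxf⟩ := hshared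
    exact reflTransGen_replaceEdge_of_mem_of_mem hG he hf hfd hve hvf hxe hxf
  push Not at hshared
  obtain ⟨x, hxe⟩ : ∃ x, x ∈ e := ⟨_, e.out_fst_mem⟩
  obtain ⟨a, haf⟩ : ∃ a, a ∈ f := ⟨_, f.out_fst_mem⟩
  set g := s(x, a)
  have hxg : x ∈ g := Sym2.mem_mk_left x a
  have hag : a ∈ g := Sym2.mem_mk_right x a
  have hgd : ¬g.IsDiag := by
    rw [Sym2.mk_isDiag_iff]; rintro rfl; exact hshared x hxe haf
  have hvg : v ∉ g := by
    rw [Sym2.mem_iff, not_or]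
    exact ⟨fun h => hve (h ▸ hxe), fun h => hvf (h ▸ haf)⟩
  have hge : g ≠ e := fun h => hshared a (h ▸ hag) haf
  have hgf : g ≠ f := fun h => hshared x hxe (h ▸ hxg)
  have hef : e ≠ f := fun h => hshared x hxe (h ▸ hxe)
  by_cases hg : g ∈ G.edgeSet
  · have h₁ := reflTransGen_replaceEdge_of_mem_of_mem hG hg hf hfd hvg hvf hag haf
    have h₂ := reflTransGen_replaceEdge_of_mem_of_mem (hG.replaceEdge hvg)
      (by rw [edgeSet_replaceEdge hfd]; exact .inr ⟨he, hge.symm⟩)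
      (by rw [edgeSet_replaceEdge hfd]; rintro (h | ⟨-, h⟩); exacts [hgf h, h rfl])
      hgd hve hvg hxe hxg
    rw [replaceEdge_replaceEdge_of_mem hg hge hef hfd] at h₂
    exact h₁.trans h₂
  · have h₁ := reflTransGen_replaceEdge_of_mem_of_mem hG he hg hgd hve hvg hxe hxg
    have h₂ := reflTransGen_replaceEdge_of_mem_of_mem (hG.replaceEdge hve)
      (by rw [edgeSet_replaceEdge hgd]; exact .inl rfl)
      (by rw [edgeSet_replaceEdge hgd]; rintro (h | ⟨h, -⟩); exacts [hgf h.symm, hf h])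
      hfd hvg hvf hag haf
    rw [replaceEdge_replaceEdge_of_notMem hg hgd hfd] at h₂
    exact h₁.trans h₂

theorem reflTransGen_of_isUniversal [Finite V] {G H : SimpleGraph V} (hG : G.IsUniversal v)
    (hH : H.IsUniversal v) (hcard : G.edgeSet.ncard = H.edgeSet.ncard) :
    ReflTransGen EdgeSlide G H := by
  by_cases hGH : G.edgeSet ⊆ H.edgeSet
  · rw [edgeSet_inj.mp (Set.eq_of_subset_of_ncard_le hGH hcard.ge)]
  obtain ⟨e, heG, heH⟩ := Set.not_subset.mp hGH
  obtain ⟨f, hfH, hfG⟩ : (H.edgeSet \ G.edgeSet).Nonempty := by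
    rw [← Set.ncard_pos, ← (Set.ncard_eq_ncard_iff_ncard_sdiff_eq_ncard_sdiff).1 hcard]
    exact (Set.ncard_pos).2 ⟨e, heG, heH⟩
  have hfd := H.not_isDiag_of_mem_edgeSet hfH
  have hve : v ∉ e := fun h => heH (hH.mem_edgeSet heG h)
  have hvf : v ∉ f := fun h => hfG (hG.mem_edgeSet hfH h)
  have hlt : ((G.replaceEdge e f).edgeSet \ H.edgeSet).ncard < (G.edgeSet \ H.edgeSet).ncard := by
    rw [edgeSet_replaceEdge hfd, Set.insert_sdiff_of_mem _ hfH, sdiff_right_comm]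
    exact Set.ncard_lt_ncard (Set.sdiff_singleton_ssubset.mpr ⟨heG, heH⟩)
  exact (reflTransGen_replaceEdge hG heG hfG hfd hve hvf).trans
    (reflTransGen_of_isUniversal (hG.replaceEdge hve) hH
      ((ncard_edgeSet_replaceEdge heG hfG hfd).trans hcard))
termination_by (G.edgeSet \ H.edgeSet).ncard

end

theorem slide_equivalent_of_same_card {V W : Type*} [Fintype V] [Fintype W]
    (G : SimpleGraph V) (S : SimpleGraph W)
    (hG : G.Connected) (hS : S.Connected)
    (hV : Fintype.card V = Fintype.card W)
    (hE : Nat.card G.edgeSet = Nat.card S.edgeSet) :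
    ∃ G' : SimpleGraph V, Relation.ReflTransGen EdgeSlide G G' ∧ Nonempty (G' ≃g S) := by
  obtain ⟨v⟩ := hG.nonempty
  obtain ⟨ψ⟩ := Fintype.card_eq.mp hV
  let φ : S ≃g S.map ψ.symm.toEmbedding := Iso.map ψ.symm S
  obtain ⟨G₁, hGG₁, hG₁⟩ := exists_reflTransGen_isUniversal hG v
  obtain ⟨S₁, hSS₁, hS₁⟩ := exists_reflTransGen_isUniversal (φ.connected_iff.mp hS) v
  have hcard : G₁.edgeSet.ncard = S₁.edgeSet.ncard := by
    rw [EdgeSlide.ncard_edgeSet_of_reflTransGen hGG₁, EdgeSlide.ncard_edgeSet_of_reflTransGen hSS₁,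
      ← Nat.card_coe_set_eq, ← Nat.card_coe_set_eq, hE, Nat.card_congr φ.mapEdgeSet]
  exact ⟨_, hGG₁.trans ((reflTransGen_of_isUniversal hG₁ hS₁ hcard).trans (symm hSS₁)), ⟨φ.symm⟩⟩
end

section
/- Let Γ be a simple graph on a finite vertex set, let σ = [s_1, s_2, …, s_k] be a path in Γ (the s_i distinct, with s_i adjacent to s_{i+1} for each i), and let y be a vertex not on σ. Suppose y is adjacent to s_i and y is not adjacent to s_j for some i, j ∈ {1, …, k}. Then, whatever other adjacencies exist between y and the vertices of σ, there is a finite sequence of edge slides transforming Γ into the graph obtained from Γ by deleting the edge y s_i and adding the edge y s_j, with all other adjacencies unchanged (a shuffle of y s_i to y s_j along σ). -/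
/-!
Write `G.moveEdge y a b` for the graph obtained from `G` by replacing the edge `ya` with
`yb`. The shuffle works along any walk `a = c₀, c₁, …, cₙ = b` of `G - y`, by induction on
the walk. If `y ≁ c₁`, slide `ya` to `yc₁` and shuffle `yc₁` to `yb` along the rest of the
walk. If `y ~ c₁`, first shuffle `yc₁` to `yb` along the rest of the walk; this frees `c₁`,
and sliding `ya` to `yc₁` restores the edge `yc₁` while removing `ya`. Slides only touch
edges at `y`, so `G - y`, and with it the walk, survives every step.
-/

namespace SimpleGraph

variable {V : Type*} (G : SimpleGraph V) (y : V)

def moveEdge (a b : V) : SimpleGraph V :=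
  G.deleteEdges {s(y, a)} ⊔ fromEdgeSet {s(y, b)}

variable {G y}

lemma edgeSet_moveEdge (a b : V) :
    (G.moveEdge y a b).edgeSet = G.edgeSet \ {s(y, a)} ∪ {s(y, b)} \ Sym2.diagSet := by
  rw [moveEdge, edgeSet_sup, edgeSet_deleteEdges, edgeSet_fromEdgeSet]

@[simp]
lemma moveEdge_adj {a b u v : V} :
    (G.moveEdge y a b).Adj u v ↔
      G.Adj u v ∧ s(u, v) ≠ s(y, a) ∨ s(u, v) = s(y, b) ∧ u ≠ v := by
  simp [moveEdge]

lemma moveEdge_adj_of_ne {a b u : V} (hua : u ≠ a) (hub : u ≠ b) :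
    (G.moveEdge y a b).Adj y u ↔ G.Adj y u := by
  rw [moveEdge_adj, Ne, Sym2.congr_right, Sym2.congr_right]
  simp [hua, hub]

lemma moveEdge_adj_target {a b : V} (hby : b ≠ y) : (G.moveEdge y a b).Adj y b := by
  simp [hby.symm]

lemma not_moveEdge_adj_source {a b : V} (hab : a ≠ b) : ¬ (G.moveEdge y a b).Adj y a := by
  rw [moveEdge_adj, Sym2.congr_right]
  simp [hab]

@[simp]
lemma deleteIncidenceSet_moveEdge (a b : V) :
    (G.moveEdge y a b).deleteIncidenceSet y = G.deleteIncidenceSet y := by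
  ext u v
  simp only [deleteIncidenceSet_adj, moveEdge_adj]
  aesop

lemma moveEdge_moveEdge_of_not_adj {a b c : V} (hyc : ¬ G.Adj y c) :
    (G.moveEdge y a c).moveEdge y c b = G.moveEdge y a b := by
  rw [← edgeSet_inj, edgeSet_moveEdge, edgeSet_moveEdge, edgeSet_moveEdge]
  rw [← mem_edgeSet] at hyc
  ext e
  simp only [Set.mem_union, Set.mem_sdiff, Set.mem_singleton_iff]
  by_cases he : e = s(y, c)
  · subst he; tauto
  · tauto

lemma moveEdge_moveEdge_of_adj {a b c : V} (hyc : G.Adj y c) (hac : a ≠ c) (hab : a ≠ b) :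
    (G.moveEdge y c b).moveEdge y a c = G.moveEdge y a b := by
  have hca : s(y, c) ≠ s(y, a) := fun h => hac (Sym2.congr_right.mp h).symm
  have hba : s(y, b) ≠ s(y, a) := fun h => hab (Sym2.congr_right.mp h).symm
  have hyc' : s(y, c) ∈ G.edgeSet \ Sym2.diagSet := ⟨hyc, G.not_isDiag_of_mem_edgeSet hyc⟩
  rw [← edgeSet_inj, edgeSet_moveEdge, edgeSet_moveEdge, edgeSet_moveEdge]
  ext e
  simp only [Set.mem_union, Set.mem_sdiff, Set.mem_singleton_iff] at hyc' ⊢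
  by_cases he : e = s(y, c)
  · subst he; tauto
  · by_cases he' : e = s(y, b)
    · subst he'; tauto
    · tauto

lemma edgeSlide_moveEdge {a c : V} (hya : G.Adj y a) (hac : G.Adj a c) (hyc : ¬ G.Adj y c)
    (hcy : c ≠ y) : EdgeSlide G (G.moveEdge y a c) :=
  ⟨y, a, c, hcy.symm, hya, hac, hyc, rfl⟩

lemma reflTransGen_edgeSlide_moveEdge_of_walk {H : SimpleGraph V} {a b : V} (w : H.Walk a b)
    {G : SimpleGraph V} (hG : G.deleteIncidenceSet y = H) (hya : G.Adj y a)
    (hyb : ¬ G.Adj y b) : Relation.ReflTransGen EdgeSlide G (G.moveEdge y a b) := by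
  induction w generalizing G with
  | nil => exact absurd hya hyb
  | @cons a c b hac w ih =>
    obtain ⟨hacG, -, hcy⟩ := deleteIncidenceSet_adj.mp (hG ▸ hac)
    have hab : a ≠ b := fun h => hyb (h ▸ hya)
    by_cases hyc : G.Adj y c
    · have hcb : c ≠ b := fun h => hyb (h ▸ hyc)
      have hacG' : (G.moveEdge y c b).Adj a c :=
        deleteIncidenceSet_le _ y (by rw [deleteIncidenceSet_moveEdge, hG]; exact hac)
      have slide : EdgeSlide (G.moveEdge y c b) ((G.moveEdge y c b).moveEdge y a c) :=
        edgeSlide_moveEdge ((moveEdge_adj_of_ne hac.ne hab).mpr hya) hacG'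
          (not_moveEdge_adj_source hcb) hcy
      rw [← moveEdge_moveEdge_of_adj hyc hac.ne hab]
      exact (ih hG hyc hyb).tail slide
    · have slide : EdgeSlide G (G.moveEdge y a c) := edgeSlide_moveEdge hya hacG hyc hcy
      by_cases hcb : c = b
      · subst hcb
        exact .single slide
      rw [← moveEdge_moveEdge_of_not_adj hyc]
      exact .head slide <| ih (by rw [deleteIncidenceSet_moveEdge, hG])
        (moveEdge_adj_target hcy) (by rwa [moveEdge_adj_of_ne hab.symm (Ne.symm hcb)])

theorem reflTransGen_edgeSlide_moveEdge {a b : V}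
    (h : (G.deleteIncidenceSet y).Reachable a b) (hya : G.Adj y a) (hyb : ¬ G.Adj y b) :
    Relation.ReflTransGen EdgeSlide G (G.moveEdge y a b) :=
  h.elim fun w => reflTransGen_edgeSlide_moveEdge_of_walk w rfl hya hyb

lemma reachable_of_adj_succ {k : ℕ} (p : Fin k → V)
    (hchain : ∀ (i : ℕ) (h : i + 1 < k),
      G.Adj (p ⟨i, Nat.lt_of_succ_lt h⟩) (p ⟨i + 1, h⟩))
    (i j : Fin k) : G.Reachable (p i) (p j) :=
  let φ : pathGraph k →g G := ⟨p, fun {u v} huv => by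
    obtain ⟨u, hu⟩ := u
    obtain ⟨v, hv⟩ := v
    rcases pathGraph_adj.mp huv with rfl | rfl
    · exact hchain u hv
    · exact (hchain v hu).symm⟩
  (pathGraph_preconnected k i j).map φ

end SimpleGraph

theorem shuffle_by_slides_general {V : Type*} (G : SimpleGraph V) (k : ℕ)
    (p : Fin k → V)
    (hchain : ∀ (i : ℕ) (h : i + 1 < k),
      G.Adj (p ⟨i, Nat.lt_of_succ_lt h⟩) (p ⟨i + 1, h⟩))
    (y : V) (hy : y ∉ Set.range p)
    (i j : Fin k) (hi : G.Adj y (p i)) (hj : ¬ G.Adj y (p j)) :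
    Relation.ReflTransGen EdgeSlide G
      (G.deleteEdges {s(y, p i)} ⊔ SimpleGraph.fromEdgeSet {s(y, p j)}) := by
  have hyp : ∀ t, p t ≠ y := fun t he => hy ⟨t, he⟩
  have hchain' : ∀ (t : ℕ) (h : t + 1 < k),
      (G.deleteIncidenceSet y).Adj (p ⟨t, Nat.lt_of_succ_lt h⟩) (p ⟨t + 1, h⟩) := fun t h =>
    SimpleGraph.deleteIncidenceSet_adj.mpr ⟨hchain t h, hyp _, hyp _⟩
  exact SimpleGraph.reflTransGen_edgeSlide_moveEdge
    (SimpleGraph.reachable_of_adj_succ p hchain' i j) hi hj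

/-- A shuffle: given a path `p 0, p 1, …, p (k-1)` in `G` and a vertex `y` not on the
path with `y ~ p i` and `y ≁ p j`, whatever other adjacencies exist between `y` and the
vertices of the path, a finite sequence of edge slides transforms `G` into the graph
obtained by deleting the edge `y (p i)` and adding the edge `y (p j)`. -/
theorem shuffle_by_slides {V : Type*} [Fintype V] (G : SimpleGraph V) (k : ℕ)
    (p : Fin k → V) (hinj : Function.Injective p)
    (hchain : ∀ (i : ℕ) (h : i + 1 < k),
      G.Adj (p ⟨i, Nat.lt_of_succ_lt h⟩) (p ⟨i + 1, h⟩))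
    (y : V) (hy : y ∉ Set.range p)
    (i j : Fin k) (hi : G.Adj y (p i)) (hj : ¬ G.Adj y (p j)) :
    Relation.ReflTransGen EdgeSlide G
      (G.deleteEdges {s(y, p i)} ⊔ SimpleGraph.fromEdgeSet {s(y, p j)}) :=
  shuffle_by_slides_general G k p hchain y hy i j hi hj
end
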